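/- Let Π' be a regular SCR polyhedral complex refining a complete regular SCR polyhedral complex Π (same recession fan), and let π_s^* denote the pullback on affine piecewise polynomial functions: for f = (f_v)_{v∈Π(0)} ∈ PP^k(Π), define (π_s^* f)_{v'} = f_v if v' = v ∈ Π(0), and (π_s^* f)_{v'} = f_{v,Λ} (the polynomial representing f on Λ) if v' ∉ Π(0), where Λ is any full-dimensional polyhedron of Π containing v' and v is any vertex of Λ. Then π_s^* f is well defined (independent of the choices of Λ and v) and π_s^* : PP^*(Π) → PP^*(Π') is an injective graded ring homomorphism. -/

import Mathlib

open scoped BigOperators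

namespace PPArakelov

/-- Evaluation of a rational-coefficient multivariate polynomial at a real point. -/
noncomputable def evalR {m : ℕ} (p : MvPolynomial (Fin m) ℚ) (x : Fin m → ℝ) : ℝ :=
  MvPolynomial.eval x (MvPolynomial.map (algebraMap ℚ ℝ) p)

/-- Realization of an integral vector in `N_ℝ`. -/
def ι {m : ℕ} (v : Fin m → ℤ) : Fin m → ℝ := fun i => (v i : ℝ)

/-- Realization of a rational vector in `N_ℝ`. -/
def ιQ {m : ℕ} (v : Fin m → ℚ) : Fin m → ℝ := fun i => (v i : ℝ)

/-- The convex cone generated by a finite set of vectors. -/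
def coneOf {m : ℕ} (s : Finset (Fin m → ℝ)) : Set (Fin m → ℝ) :=
  { x | ∃ c : (Fin m → ℝ) → ℝ, (∀ v, 0 ≤ c v) ∧ x = ∑ v ∈ s, c v • v }

/-- A rational polyhedral cone: one generated by finitely many lattice vectors. -/
def IsRatCone {m : ℕ} (σ : Set (Fin m → ℝ)) : Prop :=
  ∃ s : Finset (Fin m → ℤ), σ = coneOf (s.image ι)

/-- `τ` is a face of the cone `σ`. -/
def IsFaceOfCone {m : ℕ} (τ σ : Set (Fin m → ℝ)) : Prop :=
  ∃ u : (Fin m → ℝ) →ₗ[ℝ] ℝ, (∀ x ∈ σ, 0 ≤ u x) ∧ τ = {x ∈ σ | u x = 0}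

/-- A rational polyhedral fan in `N_ℝ = ℝ^m`. -/
structure Fan (m : ℕ) where
  cones : Set (Set (Fin m → ℝ))
  finite : cones.Finite
  rat : ∀ σ ∈ cones, IsRatCone σ
  face_mem : ∀ σ ∈ cones, ∀ τ, IsFaceOfCone τ σ → τ ∈ cones
  inter_face : ∀ σ ∈ cones, ∀ σ' ∈ cones,
    IsFaceOfCone (σ ∩ σ') σ ∧ IsFaceOfCone (σ ∩ σ') σ'

/-- The support `|Σ|` of a fan. -/
def Fan.supp {m : ℕ} (F : Fan m) : Set (Fin m → ℝ) := ⋃₀ F.cones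

/-- A piecewise polynomial function on a fan (ambient version): on each cone it is
given by a polynomial with rational coefficients. -/
def PPfun {m : ℕ} (F : Fan m) (f : (Fin m → ℝ) → ℝ) : Prop :=
  ∀ σ ∈ F.cones, ∃ p : MvPolynomial (Fin m) ℚ, ∀ x ∈ σ, f x = evalR p x

/-- A piecewise polynomial function defined on the support `|Σ|` of a fan. -/
def PPfunOn {m : ℕ} (F : Fan m) (f : ↥F.supp → ℝ) : Prop :=
  ∀ σ (hσ : σ ∈ F.cones), ∃ p : MvPolynomial (Fin m) ℚ,
    ∀ x (hx : x ∈ σ), f ⟨x, Set.mem_sUnion.mpr ⟨σ, hσ, hx⟩⟩ = evalR p x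

/-- A homogeneous piecewise polynomial function of degree `k` on a fan. -/
def PPHomog {m : ℕ} (F : Fan m) (k : ℕ) (f : (Fin m → ℝ) → ℝ) : Prop :=
  ∀ σ ∈ F.cones, ∃ p : MvPolynomial (Fin m) ℚ, p.IsHomogeneous k ∧ ∀ x ∈ σ, f x = evalR p x

/-- A piecewise linear function on a fan. -/
def IsPWLinear {m : ℕ} (F : Fan m) (f : (Fin m → ℝ) → ℝ) : Prop :=
  ∀ σ ∈ F.cones, ∃ ℓ : (Fin m → ℝ) →ₗ[ℝ] ℝ, ∀ x ∈ σ, f x = ℓ x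

/-- A regular (smooth) fan: every cone is generated by part of a basis of the lattice. -/
def Fan.IsRegular {m : ℕ} (F : Fan m) : Prop :=
  ∀ σ ∈ F.cones, ∃ (b : Module.Basis (Fin m) ℤ (Fin m → ℤ)) (s : Finset (Fin m)),
    σ = coneOf (s.image fun j => ι (b j))

/-- A compatible tuple `(f_σ)_{σ ∈ Σ}` of polynomial functions on the cones of a fan:
`f_τ = f_σ|_τ` whenever `τ` is a face of `σ`. -/
def CompatTuple {m : ℕ} (F : Fan m) (t : ∀ σ : F.cones, ↥(σ : Set (Fin m → ℝ)) → ℝ) : Prop :=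
  (∀ σ : F.cones, ∃ p : MvPolynomial (Fin m) ℚ,
      ∀ x : ↥(σ : Set (Fin m → ℝ)), t σ x = evalR p (x : Fin m → ℝ)) ∧
  ∀ σ τ : F.cones, IsFaceOfCone (τ : Set (Fin m → ℝ)) (σ : Set (Fin m → ℝ)) →
    ∀ x (hx : x ∈ (τ : Set (Fin m → ℝ))) (hx' : x ∈ (σ : Set (Fin m → ℝ))),
      t τ ⟨x, hx⟩ = t σ ⟨x, hx'⟩

/-- A rational polyhedron: convex hull of finitely many rational points plus a rational cone. -/
def polyhedronOf {m : ℕ} (V R : Finset (Fin m → ℚ)) : Set (Fin m → ℝ) :=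
  { x | ∃ a c : (Fin m → ℚ) → ℝ,
      (∀ p, 0 ≤ a p) ∧ (∑ p ∈ V, a p = 1) ∧ (∀ v, 0 ≤ c v) ∧
      x = (∑ p ∈ V, a p • ιQ p) + ∑ v ∈ R, c v • ιQ v }

def IsRatPolyhedron {m : ℕ} (P : Set (Fin m → ℝ)) : Prop :=
  ∃ V R : Finset (Fin m → ℚ), V.Nonempty ∧ P = polyhedronOf V R

/-- `Q` is a face of the polyhedron `P`. -/
def IsFaceOfPoly {m : ℕ} (Q P : Set (Fin m → ℝ)) : Prop :=
  ∃ (u : (Fin m → ℝ) →ₗ[ℝ] ℝ) (r : ℝ), (∀ x ∈ P, r ≤ u x) ∧ Q = {x ∈ P | u x = r}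

/-- A (strongly convex) rational polyhedral complex in `N_ℝ = ℝ^m`. -/
structure PolyComplex (m : ℕ) where
  polys : Set (Set (Fin m → ℝ))
  finite : polys.Finite
  rat : ∀ P ∈ polys, IsRatPolyhedron P
  face_mem : ∀ P ∈ polys, ∀ Q, IsFaceOfPoly Q P → Q.Nonempty → Q ∈ polys
  inter_face : ∀ P ∈ polys, ∀ P' ∈ polys, (P ∩ P').Nonempty →
    IsFaceOfPoly (P ∩ P') P ∧ IsFaceOfPoly (P ∩ P') P'

/-- A complete polyhedral complex covers all of `N_ℝ`. -/
def PolyComplex.IsComplete {m : ℕ} (C : PolyComplex m) : Prop := ⋃₀ C.polys = Set.univ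

/-- The vertices `Π(0)` of a polyhedral complex. -/
def PolyComplex.vtx {m : ℕ} (C : PolyComplex m) : Set (Fin m → ℝ) :=
  {v | ({v} : Set (Fin m → ℝ)) ∈ C.polys}

/-- The cone of a polyhedron `P` at a point `v` (the cone of `P` in the star fan `Π(v)`). -/
def coneAt {m : ℕ} (v : Fin m → ℝ) (P : Set (Fin m → ℝ)) : Set (Fin m → ℝ) :=
  {y | ∃ c : ℝ, 0 ≤ c ∧ ∃ x ∈ P, y = c • (x - v)}

/-- A piecewise polynomial function of degree `≤ k` on the star fan `Π(v)` at a vertex `v`. -/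
def StarPP {m : ℕ} (C : PolyComplex m) (v : Fin m → ℝ) (k : ℕ)
    (f : (Fin m → ℝ) → ℝ) : Prop :=
  ∀ P ∈ C.polys, v ∈ P → ∃ p : MvPolynomial (Fin m) ℚ, p.totalDegree ≤ k ∧
    ∀ y ∈ coneAt v P, f y = evalR p y

/-- A full-dimensional subset of `ℝ^m`. -/
def FullDim {m : ℕ} (P : Set (Fin m → ℝ)) : Prop := (interior P).Nonempty

/-- An affine piecewise polynomial function of degree `k` on a polyhedral complex:
a tuple `(f_v)` of piecewise polynomial functions on the star fans `Π(v)` such that on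
every full-dimensional polyhedron `Λ` with vertices `v, v'`, the representing polynomials
agree: `f_{v,Λ} = f_{v',Λ}` as polynomial functions on `N_ℝ`. -/
def AffinePP {m : ℕ} (C : PolyComplex m) (k : ℕ)
    (f : (Fin m → ℝ) → ((Fin m → ℝ) → ℝ)) : Prop :=
  (∀ v ∈ C.vtx, StarPP C v k (f v)) ∧
  ∀ Λ ∈ C.polys, FullDim Λ → ∀ v ∈ C.vtx, v ∈ Λ → ∀ v' ∈ C.vtx, v' ∈ Λ →
    ∀ p p' : MvPolynomial (Fin m) ℚ,
      p.totalDegree ≤ k → (∀ y ∈ coneAt v Λ, f v y = evalR p y) →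
      p'.totalDegree ≤ k → (∀ y ∈ coneAt v' Λ, f v' y = evalR p' y) →
      ∀ x : Fin m → ℝ, evalR p (x - v) = evalR p' (x - v')

/-- `y` lies in the support of the star fan of `v`. -/
def InStar {m : ℕ} (C : PolyComplex m) (v y : Fin m → ℝ) : Prop :=
  ∃ P ∈ C.polys, v ∈ P ∧ y ∈ coneAt v P

/-- A piecewise affine function with respect to the complex `C` (rational coefficients). -/
def IsPA {m : ℕ} (C : PolyComplex m) (g : (Fin m → ℝ) → ℝ) : Prop :=
  Continuous g ∧ ∀ Λ ∈ C.polys, ∃ p : MvPolynomial (Fin m) ℚ, p.totalDegree ≤ 1 ∧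
    ∀ x ∈ Λ, g x = evalR p x

/-- The tuple `f = (f_v)` induces the global function `g`. -/
def Induces {m : ℕ} (C : PolyComplex m) (f : (Fin m → ℝ) → ((Fin m → ℝ) → ℝ))
    (g : (Fin m → ℝ) → ℝ) : Prop :=
  ∀ v ∈ C.vtx, ∀ Λ ∈ C.polys, v ∈ Λ → ∀ x ∈ Λ, g x = f v (x - v)

/-- `γ` is a bounded edge of the complex `C` with endpoints `v ≠ w`. -/
def IsBddEdge {m : ℕ} (C : PolyComplex m) (γ : Set (Fin m → ℝ)) (v w : Fin m → ℝ) : Prop :=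
  γ ∈ C.polys ∧ v ≠ w ∧ v ∈ C.vtx ∧ w ∈ C.vtx ∧ γ = segment ℝ v w

/-- The condition that the tuple `(f_v)` lies in the kernel of the map `ρ`: for every
bounded edge `γ` with endpoints `v, w`, the pullbacks of `f_v` and `f_w` to the star of `γ`
agree (affinely based at the respective vertices). -/
def KerRho {m : ℕ} (C : PolyComplex m)
    (f : (Fin m → ℝ) → ((Fin m → ℝ) → ℝ)) : Prop :=
  ∀ γ v w, IsBddEdge C γ v w → ∀ P ∈ C.polys, γ ⊆ P → ∀ x ∈ P, f v (x - v) = f w (x - w)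

/-- `C'` refines (subdivides) `C`. -/
def Refines {m : ℕ} (C' C : PolyComplex m) : Prop :=
  ∀ P' ∈ C'.polys, ∃ P ∈ C.polys, P' ⊆ P

/-- The cone `c(P) ⊆ N_ℝ × ℝ_{≥0}` over a polyhedron `P ⊆ N_ℝ`. -/
def cPoly {m : ℕ} (P : Set (Fin m → ℝ)) : Set (Fin (m + 1) → ℝ) :=
  closure { z | 0 < z (Fin.last m) ∧ (fun i : Fin m => z i.castSucc / z (Fin.last m)) ∈ P }

/-- A regular SCR polyhedral complex: the cone `c(P)` of every polyhedron is a regular cone. -/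
def PolyComplex.IsRegular {m : ℕ} (C : PolyComplex m) : Prop :=
  ∀ P ∈ C.polys, ∃ (b : Module.Basis (Fin (m + 1)) ℤ (Fin (m + 1) → ℤ)) (s : Finset (Fin (m + 1))),
    cPoly P = coneOf (s.image fun j => ι (b j))

/-- The recession cone of a polyhedron. -/
def recCone {m : ℕ} (P : Set (Fin m → ℝ)) : Set (Fin m → ℝ) :=
  {y | ∀ x ∈ P, ∀ c : ℝ, 0 ≤ c → x + c • y ∈ P}

/-- The recession fan (as a set of cones) of a polyhedral complex. -/
def recSet {m : ℕ} (C : PolyComplex m) : Set (Set (Fin m → ℝ)) :=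
  {σ | ∃ P ∈ C.polys, σ = recCone P}

/-- Membership in `R(Σ)`: complete regular SCR polyhedral complexes with recession fan `Σ`. -/
def InRSigma {m : ℕ} (F : Fan m) (C : PolyComplex m) : Prop :=
  C.IsComplete ∧ C.IsRegular ∧ recSet C = F.cones

/-- Homogeneous piecewise polynomial functions of degree `k` on the fan `c(Π)`. -/
def PPconeHom {m : ℕ} (C : PolyComplex m) (k : ℕ) (f : (Fin (m + 1) → ℝ) → ℝ) : Prop :=
  ∀ P ∈ C.polys, ∃ p : MvPolynomial (Fin (m + 1)) ℚ, p.IsHomogeneous k ∧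
    ∀ z ∈ cPoly P, f z = evalR p z

/-- `PP^k_Σ(N_ℝ ⊕ ℝ_{≥0})`: functions that are piecewise polynomial of degree `k`
with respect to `c(Π)` for some `Π ∈ R(Σ)`. -/
def PPSigma {m : ℕ} (F : Fan m) (k : ℕ) (f : (Fin (m + 1) → ℝ) → ℝ) : Prop :=
  ∃ C : PolyComplex m, InRSigma F C ∧ PPconeHom C k f

/-- The canonical piecewise-linear function attached to the ray through `v` (value `1` at
`v`, vanishing on cones not containing `v`). -/
def IsRayFunGen {m : ℕ} (F : Fan m) (v : Fin m → ℝ) (f : (Fin m → ℝ) → ℝ) : Prop :=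
  IsPWLinear F f ∧ PPfun F f ∧ f v = 1 ∧
  ∀ σ ∈ F.cones, v ∉ σ → ∀ x ∈ σ, f x = 0

/-- A family `σ ↦ φ_σ` of canonical piecewise polynomial generators: `φ_σ` is the product
of the ray functions of the rays of the regular cone `σ`. -/
def IsCanonFamily {m : ℕ} (F : Fan m) (Φ : Set (Fin m → ℝ) → ((Fin m → ℝ) → ℝ)) : Prop :=
  ∀ σ ∈ F.cones, ∃ (b : Module.Basis (Fin m) ℤ (Fin m → ℤ)) (s : Finset (Fin m))
    (rf : Fin m → ((Fin m → ℝ) → ℝ)),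
      σ = coneOf (s.image fun j => ι (b j)) ∧
      (∀ j ∈ s, IsRayFunGen F (ι (b j)) (rf j)) ∧
      ∀ x, Φ σ x = ∏ j ∈ s, rf j x

/-- A maximal (full-dimensional) cone of a fan. -/
def IsMaxCone {m : ℕ} (F : Fan m) (σ : Set (Fin m → ℝ)) : Prop :=
  σ ∈ F.cones ∧ Submodule.span ℝ σ = ⊤

/-- `σ` is the minimal cone of `F` containing the set `S`. -/
def IsMinConeOver {m : ℕ} (F : Fan m) (S σ : Set (Fin m → ℝ)) : Prop :=
  σ ∈ F.cones ∧ S ⊆ σ ∧ ∀ τ ∈ F.cones, S ⊆ τ → σ ⊆ τ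

/-- The polynomial `p` represents the function `f` on the cone `σ`. -/
def Represents {m : ℕ} (f : (Fin m → ℝ) → ℝ) (σ : Set (Fin m → ℝ))
    (p : MvPolynomial (Fin m) ℚ) : Prop :=
  ∀ x ∈ σ, f x = evalR p x

/-- Maximal cones of `F'` whose image under `μ` has minimal containing cone `σ` in `F`. -/
def MaxOver {m : ℕ} (F' F : Fan m) (μ : (Fin m → ℝ) ≃ₗ[ℝ] (Fin m → ℝ))
    (σ : Set (Fin m → ℝ)) : Set (Set (Fin m → ℝ)) :=
  {σ' | IsMaxCone F' σ' ∧ IsMinConeOver F (μ '' σ') σ}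

/-- The operator `P` realizes the pushforward formula
`(π_* f)_σ = φ_σ · Σ_{μ(σ')=σ} φ_{σ'}^{-1} f_{σ'}` on maximal cones (with cleared
denominators, as an identity of the unique representing polynomials). -/
def PushFormula {m : ℕ} (F' F : Fan m) (μ : (Fin m → ℝ) ≃ₗ[ℝ] (Fin m → ℝ))
    (Φ' Φ : Set (Fin m → ℝ) → ((Fin m → ℝ) → ℝ))
    (P : ((Fin m → ℝ) → ℝ) → ((Fin m → ℝ) → ℝ)) : Prop :=
  (∀ f, PPfun F' f → PPfun F (P f)) ∧
  ∀ f, PPfun F' f →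
    ∀ q pΦ' : Set (Fin m → ℝ) → MvPolynomial (Fin m) ℚ,
      (∀ σ', IsMaxCone F' σ' → Represents f σ' (q σ') ∧ Represents (Φ' σ') σ' (pΦ' σ')) →
      ∀ σ, IsMaxCone F σ →
        ∀ r pσ : MvPolynomial (Fin m) ℚ, Represents (P f) σ r → Represents (Φ σ) σ pσ →
          ∀ y : Fin m → ℝ,
            evalR r y * ∏ᶠ σ' ∈ MaxOver F' F μ σ, evalR (pΦ' σ') (μ.symm y)
              = evalR pσ y * ∑ᶠ σ' ∈ MaxOver F' F μ σ,
                  evalR (q σ') (μ.symm y) *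
                    ∏ᶠ σ'' ∈ (MaxOver F' F μ σ) \ {σ'}, evalR (pΦ' σ'') (μ.symm y)

/-- The pullback of an affine piecewise polynomial tuple along a refinement `C' → C`. -/
def IsPullbackTuple {m : ℕ} (C C' : PolyComplex m) (k : ℕ)
    (f f' : (Fin m → ℝ) → ((Fin m → ℝ) → ℝ)) : Prop :=
  (∀ v' ∈ C'.vtx, v' ∈ C.vtx → ∀ y, InStar C' v' y → f' v' y = f v' y) ∧
  (∀ v' ∈ C'.vtx, v' ∉ C.vtx → ∀ Λ ∈ C.polys, FullDim Λ → v' ∈ Λ →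
    ∀ v ∈ C.vtx, v ∈ Λ → ∀ p : MvPolynomial (Fin m) ℚ, p.totalDegree ≤ k →
      (∀ y ∈ coneAt v Λ, f v y = evalR p y) →
      ∀ P' ∈ C'.polys, v' ∈ P' → P' ⊆ Λ → ∀ y ∈ coneAt v' P',
        f' v' y = evalR p ((y + v') - v))

/-- The piecewise linear function `φ_{v,γ}` attached at the vertex `v` to the edge `γ`
towards the vertex `w`: linear on the cones of `Π(v)`, vanishing on cones of polyhedra
not containing `w`, normalized on the ray towards `w`. -/
def IsRayFunAt {m : ℕ} (C : PolyComplex m) (v w : Fin m → ℝ)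
    (φ : (Fin m → ℝ) → ℝ) : Prop :=
  (∀ P ∈ C.polys, v ∈ P → ∃ ℓ : (Fin m → ℝ) →ₗ[ℝ] ℝ, ∀ y ∈ coneAt v P, φ y = ℓ y) ∧
  (∀ P ∈ C.polys, v ∈ P → w ∉ P → ∀ y ∈ coneAt v P, φ y = 0) ∧
  (∃ c : ℝ, 0 < c ∧ φ (c • (w - v)) = 1)

/-- `g = -γρ(f)`: the characterization of the composite map `-γρ` in terms of
representing polynomials, following the explicit formula of the pushforward and pullback
maps: `(-γρ f)_v = Σ_γ (u_{v,γ*} u_{v_γ,γ}^* f_{v_γ} - φ_{v,γ} f_v)`. -/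
def IsMinusGammaRho {m : ℕ} (C : PolyComplex m) (k : ℕ)
    (φ : (Fin m → ℝ) → (Fin m → ℝ) → ((Fin m → ℝ) → ℝ))
    (f g : (Fin m → ℝ) → ((Fin m → ℝ) → ℝ)) : Prop :=
  ∀ v ∈ C.vtx, ∀ P ∈ C.polys, FullDim P → v ∈ P →
    ∀ q : (Fin m → ℝ) → MvPolynomial (Fin m) ℚ,
      (∀ u ∈ C.vtx, u ∈ P →
        (q u).totalDegree ≤ k ∧ ∀ y ∈ coneAt u P, f u y = evalR (q u) y) →
      ∀ y ∈ coneAt v P,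
        g v y = ∑ᶠ w ∈ {w | w ∈ C.vtx ∧ w ≠ v ∧ segment ℝ v w ∈ C.polys ∧
                            segment ℝ v w ⊆ P},
          φ v w y * (evalR (q w) ((y + v) - w) - evalR (q v) y)

/-!
On a full-dimensional polyhedron `Λ` of `Π` the polynomials `f_{v,Λ}` at the vertices `v` of `Λ`
define one global polynomial `x ↦ f_{v,Λ}(x - v)`, and the pullback at a new vertex `v'` is this
polynomial read off at `v'`. It does not depend on `Λ`: two such polyhedra meet in a polyhedron of
`Π`, which has a vertex `w`; there both global polynomials agree with `f_w`, and the intersection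
contains an initial segment of every ray from `v'` into both, so the polynomials agree on the whole
line. All other identities come from the identity theorem on a full-dimensional cone; for
injectivity one uses that every full-dimensional `Λ` contains a full-dimensional polyhedron of
`Π'`. Such full-dimensional polyhedra exist by a measure argument, which needs that rational
polyhedra are closed (Carathéodory's theorem for finitely generated cones).
-/

open Set
open scoped Pointwise Topology

section Analytic

variable {E : Type*} [NormedAddCommGroup E] [NormedSpace ℝ E]

lemma eq_of_eqOn_of_interior_nonempty {F G : E → ℝ} (hF : AnalyticOnNhd ℝ F univ)
    (hG : AnalyticOnNhd ℝ G univ) {S : Set E} (hS : (interior S).Nonempty)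
    (h : EqOn F G S) : F = G := by
  obtain ⟨z, hz⟩ := hS
  refine hF.eq_of_eventuallyEq hG (z₀ := z) ?_
  filter_upwards [isOpen_interior.mem_nhds hz] with x hx using h (interior_subset hx)

lemma apply_add_smul_eq_of_forall_Icc {F G : E → ℝ} (hF : AnalyticOnNhd ℝ F univ)
    (hG : AnalyticOnNhd ℝ G univ) {a y : E} {ε : ℝ} (hε : 0 < ε)
    (h : ∀ t ∈ Icc 0 ε, F (a + t • y) = G (a + t • y)) (t : ℝ) :
    F (a + t • y) = G (a + t • y) := by
  have hline : AnalyticOnNhd ℝ (fun t : ℝ => a + t • y) univ := fun t _ =>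
    analyticAt_const.add (analyticAt_id.smul analyticAt_const)
  have := eq_of_eqOn_of_interior_nonempty (hF.comp hline (mapsTo_univ _ _))
    (hG.comp hline (mapsTo_univ _ _)) (by simpa [interior_Icc] using hε) h
  exact congrFun this t

end Analytic

lemma analyticOnNhd_evalR {m : ℕ} (p : MvPolynomial (Fin m) ℚ) :
    AnalyticOnNhd ℝ (evalR p) univ :=
  AnalyticOnNhd.eval_mvPolynomial _

lemma analyticOnNhd_evalR_comp_add {m : ℕ} (p : MvPolynomial (Fin m) ℚ) (a : Fin m → ℝ) :
    AnalyticOnNhd ℝ (fun x => evalR p (x + a)) univ :=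
  (analyticOnNhd_evalR p).comp (analyticOnNhd_id.add analyticOnNhd_const) (mapsTo_univ _ _)

section ConeHull

variable {E : Type*} [NormedAddCommGroup E] [NormedSpace ℝ E] {α : Type*}

def coneHull (g : α → E) (s : Finset α) : Set E :=
  {x | ∃ c : α → ℝ, (∀ i, 0 ≤ c i) ∧ x = ∑ i ∈ s, c i • g i}

lemma coneHull_mono (g : α → E) {s t : Finset α} (h : t ⊆ s) : coneHull g t ⊆ coneHull g s := by
  classical
  rintro x ⟨c, hc, rfl⟩
  refine ⟨fun i => if i ∈ t then c i else 0, fun i => by dsimp only; split_ifs <;> simp [hc], ?_⟩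
  rw [← Finset.sum_subset h fun i _ hi => by simp [hi]]
  exact Finset.sum_congr rfl fun i hi => by simp [hi]

lemma exists_mem_coneHull_erase [DecidableEq α] {g : α → E} {s : Finset α} {x : E}
    (hx : x ∈ coneHull g s) (hs : ¬ LinearIndepOn ℝ g s) :
    ∃ i ∈ s, x ∈ coneHull g (s.erase i) := by
  obtain ⟨c, hc, rfl⟩ := hx
  obtain ⟨f, hf, j, hj, hfj⟩ := not_linearIndepOn_finset_iff.mp hs
  wlog hpos : 0 < f j generalizing f
  · exact this (-f) (by simp [neg_smul, hf]) (neg_ne_zero.mpr hfj)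
      (neg_pos.mpr (lt_of_le_of_ne (not_lt.mp hpos) hfj))
  -- Move along the dependency `f` until the first coefficient of `c` hits zero.
  obtain ⟨i, hi, hmin⟩ := Finset.exists_min_image {i ∈ s | 0 < f i} (fun i => c i / f i)
    ⟨j, by simp [hj, hpos]⟩
  rw [Finset.mem_filter] at hi
  set r := c i / f i
  have hle : ∀ a ∈ s, r * f a ≤ c a := by
    intro a ha
    rcases lt_or_ge 0 (f a) with h | h
    · exact (le_div_iff₀ h).mp (hmin a (by simp [ha, h]))
    · nlinarith [div_nonneg (hc i) hi.2.le, hc a]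
  refine ⟨i, hi.1, fun a => max (c a - r * f a) 0, fun a => le_max_right _ _, ?_⟩
  have hzero : max (c i - r * f i) 0 • g i = 0 := by simp [r, div_mul_cancel₀ _ hi.2.ne']
  rw [Finset.sum_erase (f := fun a => max (c a - r * f a) 0 • g a) s hzero]
  calc ∑ a ∈ s, c a • g a = ∑ a ∈ s, c a • g a - r • ∑ a ∈ s, f a • g a := by
        rw [hf, smul_zero, sub_zero]
    _ = ∑ a ∈ s, (c a - r * f a) • g a := by
        rw [Finset.smul_sum, ← Finset.sum_sub_distrib]
        simp only [sub_smul, mul_smul]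
    _ = _ := Finset.sum_congr rfl fun a ha => by
        rw [max_eq_left (sub_nonneg.mpr (hle a ha))]

lemma exists_linearIndepOn_of_mem_coneHull {g : α → E} {s : Finset α} {x : E}
    (hx : x ∈ coneHull g s) : ∃ t ⊆ s, LinearIndepOn ℝ g (t : Set α) ∧ x ∈ coneHull g t := by
  classical
  induction s using Finset.strongInduction with
  | H s ih =>
    by_cases hs : LinearIndepOn ℝ g (s : Set α)
    · exact ⟨s, subset_rfl, hs, hx⟩
    obtain ⟨i, hi, hxi⟩ := exists_mem_coneHull_erase hx hs
    obtain ⟨t, hts, ht, hxt⟩ := ih _ (Finset.erase_ssubset hi) hxi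
    exact ⟨t, hts.trans (Finset.erase_subset _ _), ht, hxt⟩

lemma isClosed_coneHull_of_linearIndepOn {g : α → E} {t : Finset α}
    (ht : LinearIndepOn ℝ g (t : Set α)) : IsClosed (coneHull g t) := by
  classical
  set φ := Fintype.linearCombination ℝ (fun i : (t : Set α) => g i)
  have himage : coneHull g t = φ '' {c | ∀ i, 0 ≤ c i} := by
    ext x
    constructor
    · rintro ⟨c, hc, rfl⟩
      refine ⟨fun i => c i, fun i => hc i, ?_⟩
      simp only [φ, Fintype.linearCombination_apply]
      exact Finset.sum_attach t fun a => c a • g a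
    · rintro ⟨c, hc, rfl⟩
      refine ⟨fun a => if h : a ∈ t then c ⟨a, h⟩ else 0,
        fun a => by dsimp only; split_ifs; exacts [hc _, le_rfl], ?_⟩
      rw [Fintype.linearCombination_apply, ← Finset.sum_coe_sort t]
      exact Finset.sum_congr rfl fun i _ => by simp
  have hemb := LinearMap.isClosedEmbedding_of_injective
    (LinearMap.ker_eq_bot.mpr ht.fintypeLinearCombination_injective)
  rw [himage]
  refine hemb.isClosedMap _ ?_
  simpa only [ofPred_forall] using isClosed_iInter fun i => isClosed_le continuous_const
    (continuous_apply i)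

lemma isClosed_coneHull [FiniteDimensional ℝ E] (g : α → E) (s : Finset α) :
    IsClosed (coneHull g s) := by
  have : coneHull g s =
      ⋃ t ∈ {t : Finset α | t ⊆ s ∧ LinearIndepOn ℝ g (t : Set α)}, coneHull g t := by
    refine Subset.antisymm (fun x hx => ?_) (iUnion₂_subset fun t ht => coneHull_mono g ht.1)
    obtain ⟨t, hts, ht, hxt⟩ := exists_linearIndepOn_of_mem_coneHull hx
    exact mem_iUnion₂.mpr ⟨t, ⟨hts, ht⟩, hxt⟩
  rw [this]
  refine Set.Finite.isClosed_biUnion ?_ fun t ht => isClosed_coneHull_of_linearIndepOn ht.2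
  exact s.powerset.finite_toSet.subset fun t ht => Finset.mem_powerset.mpr ht.1

end ConeHull

section Polyhedron

variable {m : ℕ} {V R : Finset (Fin m → ℚ)}

lemma ιQ_mem_polyhedronOf {p : Fin m → ℚ} (hp : p ∈ V) : ιQ p ∈ polyhedronOf V R := by
  classical
  refine ⟨Pi.single p 1, 0, fun q => ?_, by simp [hp], fun _ => le_rfl, ?_⟩
  · by_cases h : q = p <;> simp [h]
  · simp [Pi.single_apply, hp]

lemma convex_polyhedronOf : Convex ℝ (polyhedronOf V R) := by
  rintro _ ⟨a, c, ha, hsa, hc, rfl⟩ _ ⟨b, d, hb, hsb, hd, rfl⟩ θ η hθ hη hθη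
  refine ⟨θ • a + η • b, θ • c + η • d,
    fun p => add_nonneg (mul_nonneg hθ (ha p)) (mul_nonneg hη (hb p)), ?_,
    fun v => add_nonneg (mul_nonneg hθ (hc v)) (mul_nonneg hη (hd v)), ?_⟩
  · simp [Finset.sum_add_distrib, ← Finset.mul_sum, hsa, hsb, hθη]
  · simp only [Pi.add_apply, Pi.smul_apply, smul_eq_mul, add_smul, mul_smul,
      Finset.sum_add_distrib, ← Finset.smul_sum, smul_add]
    abel

lemma polyhedronOf_eq_convexHull_add_coneHull :
    polyhedronOf V R = convexHull ℝ (ιQ '' (V : Set (Fin m → ℚ))) + coneHull ιQ R := by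
  ext x
  constructor
  · rintro ⟨a, c, ha, hsa, hc, rfl⟩
    refine add_mem_add ((convex_convexHull ℝ _).sum_mem (fun p _ => ha p) hsa fun p hp => ?_)
      ⟨c, hc, rfl⟩
    exact subset_convexHull ℝ _ (mem_image_of_mem ιQ hp)
  · rintro ⟨y, hy, _, ⟨c, hc, rfl⟩, rfl⟩
    have hV : convexHull ℝ (ιQ '' (V : Set (Fin m → ℚ))) ⊆ polyhedronOf V ∅ :=
      convexHull_min (image_subset_iff.mpr fun p hp => ιQ_mem_polyhedronOf hp)
        convex_polyhedronOf
    obtain ⟨a, -, ha, hsa, -, rfl⟩ := hV hy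
    exact ⟨a, c, ha, hsa, hc, by simp⟩

lemma isClosed_polyhedronOf : IsClosed (polyhedronOf V R) := by
  rw [polyhedronOf_eq_convexHull_add_coneHull]
  exact (isClosed_coneHull ιQ R).add_left_of_isCompact
    ((V.finite_toSet.image ιQ).isCompact_convexHull (𝕜 := ℝ))

end Polyhedron

namespace PolyComplex

variable {m : ℕ} {C : PolyComplex m} {P Q : Set (Fin m → ℝ)}

lemma isClosed_of_mem (hP : P ∈ C.polys) : IsClosed P := by
  obtain ⟨V, R, -, rfl⟩ := C.rat P hP
  exact isClosed_polyhedronOf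

lemma convex_of_mem (hP : P ∈ C.polys) : Convex ℝ P := by
  obtain ⟨V, R, -, rfl⟩ := C.rat P hP
  exact convex_polyhedronOf

lemma nonempty_of_mem (hP : P ∈ C.polys) : P.Nonempty := by
  obtain ⟨V, R, ⟨p, hp⟩, rfl⟩ := C.rat P hP
  exact ⟨_, ιQ_mem_polyhedronOf hp⟩

lemma exists_eq_ιQ_of_mem_vtx {v : Fin m → ℝ} (hv : v ∈ C.vtx) : ∃ w, v = ιQ w := by
  obtain ⟨V, R, ⟨p, hp⟩, hV⟩ := C.rat _ hv
  have : ιQ p ∈ ({v} : Set (Fin m → ℝ)) := hV ▸ ιQ_mem_polyhedronOf hp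
  exact ⟨p, (mem_singleton_iff.mp this).symm⟩

lemma inter_mem (hP : P ∈ C.polys) (hQ : Q ∈ C.polys) (hPQ : (P ∩ Q).Nonempty) :
    P ∩ Q ∈ C.polys :=
  C.face_mem P hP _ (C.inter_face P hP Q hQ hPQ).1 hPQ

end PolyComplex

section Faces

variable {E : Type*} [NormedAddCommGroup E] [NormedSpace ℝ E]

lemma exists_lineMap_mem_of_mem_intrinsicInterior {P : Set E} {x₀ p : E}
    (hx₀ : x₀ ∈ intrinsicInterior ℝ P) (hp : p ∈ P) :
    ∃ t : ℝ, 1 < t ∧ AffineMap.lineMap p x₀ t ∈ P := by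
  obtain ⟨y, hy, rfl⟩ := hx₀
  let γ : ℝ → affineSpan ℝ P := fun t =>
    ⟨AffineMap.lineMap p y t, AffineMap.lineMap_mem t (subset_affineSpan ℝ P hp) y.2⟩
  have hγ1 : γ 1 = y := Subtype.ext (AffineMap.lineMap_apply_one _ _)
  have hγ : Continuous γ := AffineMap.lineMap_continuous.subtype_mk _
  have hev : ∀ᶠ t in 𝓝[>] (1 : ℝ), γ t ∈ interior ((↑) ⁻¹' P) :=
    nhdsWithin_le_nhds <| hγ.continuousAt.preimage_mem_nhds
      (hγ1 ▸ isOpen_interior.mem_nhds hy)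
  obtain ⟨t, ht, ht1⟩ := (hev.and self_mem_nhdsWithin).exists
  exact ⟨t, ht1, (interior_subset ht : γ t ∈ ((↑) ⁻¹' P : Set (affineSpan ℝ P)))⟩

end Faces

lemma IsFaceOfPoly.eq_of_mem_intrinsicInterior {m : ℕ} {P Q : Set (Fin m → ℝ)}
    (hQ : IsFaceOfPoly Q P) {x₀ : Fin m → ℝ} (hx₀Q : x₀ ∈ Q)
    (hx₀ : x₀ ∈ intrinsicInterior ℝ P) : Q = P := by
  obtain ⟨u, r, hu, rfl⟩ := hQ
  refine (sep_subset _ _).antisymm fun p hp => ⟨hp, ?_⟩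
  obtain ⟨t, ht, hmem⟩ := exists_lineMap_mem_of_mem_intrinsicInterior hx₀ hp
  have hline : u (AffineMap.lineMap p x₀ t) = (1 - t) * u p + t * u x₀ := by
    simp [AffineMap.lineMap_apply_module]
  nlinarith [hu _ hmem, hu p hp, hx₀Q.2]

lemma PolyComplex.subset_of_mem_intrinsicInterior {m : ℕ} {C : PolyComplex m}
    {P Q : Set (Fin m → ℝ)} (hP : P ∈ C.polys) (hQ : Q ∈ C.polys) {x : Fin m → ℝ}
    (hx : x ∈ intrinsicInterior ℝ P) (hxQ : x ∈ Q) : P ⊆ Q := by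
  have hxP := intrinsicInterior_subset hx
  have hface := (C.inter_face Q hQ P hP ⟨x, hxQ, hxP⟩).2
  rw [← hface.eq_of_mem_intrinsicInterior ⟨hxQ, hxP⟩ hx]
  exact inter_subset_left

section FullDim

open MeasureTheory

variable {m : ℕ}

lemma volume_eq_zero_of_not_fullDim {Q : Set (Fin m → ℝ)} (hQ : Convex ℝ Q) (h : ¬FullDim Q) :
    volume Q = 0 :=
  measure_mono_null (fun x hx => (⟨subset_closure hx, fun hi => h ⟨x, hi⟩⟩ : x ∈ frontier Q))
    (hQ.addHaar_frontier volume)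

lemma exists_fullDim_of_subset_sUnion {S : Set (Set (Fin m → ℝ))} (hS : S.Finite)
    (hconv : ∀ Q ∈ S, Convex ℝ Q) {U : Set (Fin m → ℝ)} (hU : IsOpen U) (hne : U.Nonempty)
    (hcover : U ⊆ ⋃₀ S) : ∃ Q ∈ S, FullDim Q ∧ (Q ∩ U).Nonempty := by
  by_contra! h
  refine hU.measure_ne_zero volume hne (measure_mono_null (t := ⋃ Q ∈ S, Q ∩ U) ?_ ?_)
  · intro x hx
    obtain ⟨Q, hQ, hxQ⟩ := hcover hx
    exact mem_iUnion₂.mpr ⟨Q, hQ, hxQ, hx⟩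
  refine (measure_biUnion_null_iff hS.countable).mpr fun Q hQ => ?_
  by_cases hfd : FullDim Q
  · simp [h Q hQ hfd]
  · exact measure_mono_null inter_subset_left (volume_eq_zero_of_not_fullDim (hconv Q hQ) hfd)

lemma PolyComplex.exists_fullDim_superset {C : PolyComplex m} (hC : C.IsComplete)
    {P : Set (Fin m → ℝ)} (hP : P ∈ C.polys) : ∃ Λ ∈ C.polys, FullDim Λ ∧ P ⊆ Λ := by
  obtain ⟨x₀, hx₀⟩ := (C.nonempty_of_mem hP).intrinsicInterior (C.convex_of_mem hP)
  -- Near `x₀` every point lies in a polyhedron through `x₀`: those missing `x₀` form a closed set.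
  set U := (⋃ Q ∈ {Q ∈ C.polys | x₀ ∉ Q}, Q)ᶜ
  have hU : IsOpen U := ((C.finite.subset (sep_subset _ _)).isClosed_biUnion
    fun Q hQ => C.isClosed_of_mem hQ.1).isOpen_compl
  have hx₀U : x₀ ∈ U := by simp [U]
  have hcover : U ⊆ ⋃₀ {Q ∈ C.polys | x₀ ∈ Q} := by
    intro z hz
    obtain ⟨Q, hQ, hzQ⟩ := hC.symm ▸ mem_univ z
    by_cases hx₀Q : x₀ ∈ Q
    · exact ⟨Q, ⟨hQ, hx₀Q⟩, hzQ⟩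
    · exact absurd (mem_iUnion₂.mpr ⟨Q, ⟨hQ, hx₀Q⟩, hzQ⟩) hz
  obtain ⟨Λ, ⟨hΛ, hx₀Λ⟩, hfd, -⟩ := exists_fullDim_of_subset_sUnion
    (C.finite.subset (sep_subset _ _)) (fun Q hQ => C.convex_of_mem hQ.1) hU ⟨x₀, hx₀U⟩ hcover
  exact ⟨Λ, hΛ, hfd, C.subset_of_mem_intrinsicInterior hP hΛ hx₀ hx₀Λ⟩

lemma Refines.exists_fullDim_subset {C C' : PolyComplex m} (href : Refines C' C)
    (hC' : C'.IsComplete) {Λ : Set (Fin m → ℝ)} (hΛ : Λ ∈ C.polys) (hfd : FullDim Λ) :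
    ∃ P' ∈ C'.polys, FullDim P' ∧ P' ⊆ Λ := by
  obtain ⟨P', hP', hfd', x, hxP', hxΛ⟩ := exists_fullDim_of_subset_sUnion C'.finite
    (fun Q hQ => C'.convex_of_mem hQ) isOpen_interior hfd (hC' ▸ subset_univ _)
  obtain ⟨Q, hQ, hP'Q⟩ := href P' hP'
  have hΛQ : Λ ⊆ Q := C.subset_of_mem_intrinsicInterior hΛ hQ
    (interior_subset_intrinsicInterior hxΛ) (hP'Q hxP')
  have hQΛ : Q ⊆ Λ := C.subset_of_mem_intrinsicInterior hQ hΛ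
    (interior_subset_intrinsicInterior (interior_mono hΛQ hxΛ)) (interior_subset hxΛ)
  exact ⟨P', hP', hfd', hP'Q.trans hQΛ⟩

end FullDim

section ConeAt

variable {m : ℕ} {P Q : Set (Fin m → ℝ)} {v : Fin m → ℝ}

lemma coneAt_mono (v : Fin m → ℝ) (h : P ⊆ Q) : coneAt v P ⊆ coneAt v Q := by
  rintro y ⟨c, hc, x, hx, rfl⟩
  exact ⟨c, hc, x, h hx, rfl⟩

lemma sub_mem_coneAt {x : Fin m → ℝ} (hx : x ∈ P) : x - v ∈ coneAt v P :=
  ⟨1, zero_le_one, x, hx, (one_smul _ _).symm⟩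

lemma exists_pos_forall_add_smul_mem_of_mem_coneAt (hP : Convex ℝ P) (hv : v ∈ P)
    {y : Fin m → ℝ} (hy : y ∈ coneAt v P) : ∃ ε : ℝ, 0 < ε ∧ ∀ t ∈ Icc 0 ε, v + t • y ∈ P := by
  obtain ⟨c, hc, x, hx, rfl⟩ := hy
  rcases hc.eq_or_lt with rfl | hc
  · exact ⟨1, one_pos, fun t _ => by simpa using hv⟩
  refine ⟨c⁻¹, inv_pos.mpr hc, fun t ht => ?_⟩
  have hs : t * c ∈ Icc (0 : ℝ) 1 :=
    ⟨mul_nonneg ht.1 hc.le,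
      (mul_le_mul_of_nonneg_right ht.2 hc.le).trans_eq (inv_mul_cancel₀ hc.ne')⟩
  rw [smul_smul]
  exact hP.add_smul_sub_mem hv hx hs

lemma eq_of_eqOn_coneAt {F G : (Fin m → ℝ) → ℝ} (hF : AnalyticOnNhd ℝ F univ)
    (hG : AnalyticOnNhd ℝ G univ) {Λ : Set (Fin m → ℝ)} (hΛ : FullDim Λ) (v : Fin m → ℝ)
    (h : ∀ y ∈ coneAt v Λ, F y = G y) : F = G := by
  obtain ⟨x, hx⟩ := hΛ
  refine eq_of_eqOn_of_interior_nonempty hF hG ⟨x - v, interior_maximal ?_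
    (isOpen_interior.preimage (continuous_add_const v)) (by simpa using hx)⟩ h
  exact fun z hz => ⟨1, zero_le_one, z + v, interior_subset hz, by simp⟩

end ConeAt

section Translation

open MvPolynomial

variable {m : ℕ}

lemma totalDegree_aeval_le {σ τ R : Type*} [CommSemiring R] {g : σ → MvPolynomial τ R}
    (hg : ∀ i, (g i).totalDegree ≤ 1) (p : MvPolynomial σ R) :
    (aeval g p).totalDegree ≤ p.totalDegree := by
  conv_lhs => rw [p.as_sum]
  rw [map_sum]
  refine totalDegree_finsetSum_le fun s hs => ?_
  rw [aeval_monomial, algebraMap_eq]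
  refine (totalDegree_mul _ _).trans ?_
  rw [totalDegree_C, zero_add]
  refine (totalDegree_finsetProd _ _).trans ((Finset.sum_le_sum fun i _ => ?_).trans
    (le_totalDegree hs))
  exact (totalDegree_pow _ _).trans (by simpa using Nat.mul_le_mul_left (s i) (hg i))

noncomputable def transl (w : Fin m → ℚ) (p : MvPolynomial (Fin m) ℚ) : MvPolynomial (Fin m) ℚ :=
  aeval (fun i => X i + C (w i)) p

lemma evalR_transl (w : Fin m → ℚ) (p : MvPolynomial (Fin m) ℚ) (y : Fin m → ℝ) :
    evalR (transl w p) y = evalR p (y + ιQ w) := by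
  simp only [evalR, transl, eval_map, ← aeval_def, ← AlgHom.comp_apply, comp_aeval]
  congr 1
  ext i
  simp [ιQ]

lemma totalDegree_transl_le (w : Fin m → ℚ) (p : MvPolynomial (Fin m) ℚ) :
    (transl w p).totalDegree ≤ p.totalDegree :=
  totalDegree_aeval_le (fun i => (totalDegree_add _ _).trans (by simp [totalDegree_X])) p

end Translation

section Pullback

variable {m : ℕ} {C C' : PolyComplex m} {k : ℕ} {f f' : (Fin m → ℝ) → (Fin m → ℝ) → ℝ}
  {Λ : Set (Fin m → ℝ)} {v : Fin m → ℝ} {p : MvPolynomial (Fin m) ℚ}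

lemma AffinePP.evalR_add_sub_eq (hf : AffinePP C k f) (hΛ : Λ ∈ C.polys) (hfd : FullDim Λ)
    (hv : v ∈ C.vtx) (hvΛ : v ∈ Λ) (hpd : p.totalDegree ≤ k)
    (hp : ∀ y ∈ coneAt v Λ, f v y = evalR p y) {w : Fin m → ℝ} (hw : w ∈ C.vtx) (hwΛ : w ∈ Λ)
    {y : Fin m → ℝ} (hy : y ∈ coneAt w Λ) : evalR p (y + w - v) = f w y := by
  obtain ⟨q, hqd, hq⟩ := hf.1 w hw Λ hΛ hwΛ
  rw [hf.2 Λ hΛ hfd v hv hvΛ w hw hwΛ p q hpd hp hqd hq, add_sub_cancel_right, hq y hy]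

lemma AffinePP.exists_fullDim_superset_rep (hf : AffinePP C k f) (hC : C.IsComplete)
    (href : Refines C' C) (hSCR : ∀ P ∈ C.polys, ∃ v ∈ C.vtx, v ∈ P)
    {P' : Set (Fin m → ℝ)} (hP' : P' ∈ C'.polys) :
    ∃ Λ ∈ C.polys, FullDim Λ ∧ P' ⊆ Λ ∧ ∃ v ∈ C.vtx, v ∈ Λ ∧
      ∃ p : MvPolynomial (Fin m) ℚ, p.totalDegree ≤ k ∧ ∀ y ∈ coneAt v Λ, f v y = evalR p y := by
  obtain ⟨Q, hQ, hP'Q⟩ := href P' hP'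
  obtain ⟨Λ, hΛ, hfd, hQΛ⟩ := C.exists_fullDim_superset hC hQ
  obtain ⟨v, hv, hvΛ⟩ := hSCR Λ hΛ
  obtain ⟨p, hpd, hp⟩ := hf.1 v hv Λ hΛ hvΛ
  exact ⟨Λ, hΛ, hfd, hP'Q.trans hQΛ, v, hv, hvΛ, p, hpd, hp⟩

def IsPullbackValue (C : PolyComplex m) (k : ℕ) (f : (Fin m → ℝ) → (Fin m → ℝ) → ℝ)
    (v' y : Fin m → ℝ) (r : ℝ) : Prop :=
  ∃ Λ ∈ C.polys, FullDim Λ ∧ v' ∈ Λ ∧ y ∈ coneAt v' Λ ∧ ∃ v ∈ C.vtx, v ∈ Λ ∧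
    ∃ p : MvPolynomial (Fin m) ℚ, p.totalDegree ≤ k ∧ (∀ z ∈ coneAt v Λ, f v z = evalR p z) ∧
      r = evalR p (y + v' - v)

lemma AffinePP.isPullbackValue_unique (hf : AffinePP C k f)
    (hSCR : ∀ P ∈ C.polys, ∃ v ∈ C.vtx, v ∈ P) {v' y : Fin m → ℝ} {r₁ r₂ : ℝ}
    (h₁ : IsPullbackValue C k f v' y r₁) (h₂ : IsPullbackValue C k f v' y r₂) : r₁ = r₂ := by
  obtain ⟨Λ₁, hΛ₁, hfd₁, hv'Λ₁, hy₁, v₁, hv₁, hv₁Λ₁, p₁, hp₁d, hp₁, rfl⟩ := h₁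
  obtain ⟨Λ₂, hΛ₂, hfd₂, hv'Λ₂, hy₂, v₂, hv₂, hv₂Λ₂, p₂, hp₂d, hp₂, rfl⟩ := h₂
  -- Both polynomials describe `f` on `Λ₁ ∩ Λ₂`, read off at one of its vertices `w`,
  -- and this intersection contains an initial segment of the ray from `v'` along `y`.
  obtain ⟨w, hw, hwΛ₁, hwΛ₂⟩ := hSCR _ (C.inter_mem hΛ₁ hΛ₂ ⟨v', hv'Λ₁, hv'Λ₂⟩)
  obtain ⟨ε₁, hε₁, hseg₁⟩ :=
    exists_pos_forall_add_smul_mem_of_mem_coneAt (C.convex_of_mem hΛ₁) hv'Λ₁ hy₁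
  obtain ⟨ε₂, hε₂, hseg₂⟩ :=
    exists_pos_forall_add_smul_mem_of_mem_coneAt (C.convex_of_mem hΛ₂) hv'Λ₂ hy₂
  have hglobal : ∀ {Λ v p}, Λ ∈ C.polys → FullDim Λ → v ∈ C.vtx → v ∈ Λ →
      MvPolynomial.totalDegree p ≤ k → (∀ z ∈ coneAt v Λ, f v z = evalR p z) → w ∈ Λ →
      ∀ x ∈ Λ, evalR p (x - v) = f w (x - w) := fun hΛ hfd hv hvΛ hpd hp hwΛ x hx => by
    simpa using hf.evalR_add_sub_eq hΛ hfd hv hvΛ hpd hp hw hwΛ (sub_mem_coneAt hx)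
  have hline := apply_add_smul_eq_of_forall_Icc (a := v') (y := y)
    (F := fun x => evalR p₁ (x - v₁)) (G := fun x => evalR p₂ (x - v₂))
    (by simpa [sub_eq_add_neg] using analyticOnNhd_evalR_comp_add p₁ (-v₁))
    (by simpa [sub_eq_add_neg] using analyticOnNhd_evalR_comp_add p₂ (-v₂))
    (lt_min hε₁ hε₂) (fun t ht => ?_) 1
  · simpa [add_comm] using hline
  · rw [hglobal hΛ₁ hfd₁ hv₁ hv₁Λ₁ hp₁d hp₁ hwΛ₁ _ (hseg₁ t ⟨ht.1, ht.2.trans (min_le_left _ _)⟩),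
      hglobal hΛ₂ hfd₂ hv₂ hv₂Λ₂ hp₂d hp₂ hwΛ₂ _ (hseg₂ t ⟨ht.1, ht.2.trans (min_le_right _ _)⟩)]

open Classical in
-- `0` is a junk value: on the star of every vertex of `C'` some value is prescribed.
noncomputable def pullback (C : PolyComplex m) (k : ℕ) (f : (Fin m → ℝ) → (Fin m → ℝ) → ℝ) :
    (Fin m → ℝ) → (Fin m → ℝ) → ℝ :=
  fun v' y => if v' ∈ C.vtx then f v' y
    else if h : ∃ r, IsPullbackValue C k f v' y r then h.choose else 0

lemma isPullbackTuple_pullback (hf : AffinePP C k f)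
    (hSCR : ∀ P ∈ C.polys, ∃ v ∈ C.vtx, v ∈ P) : IsPullbackTuple C C' k f (pullback C k f) := by
  refine ⟨fun v' _ hold y _ => by simp [pullback, hold], ?_⟩
  intro v' _ hold Λ hΛ hfd hv'Λ v hv hvΛ p hpd hp P' _ _ hP'Λ y hy
  have hval : IsPullbackValue C k f v' y (evalR p (y + v' - v)) :=
    ⟨Λ, hΛ, hfd, hv'Λ, coneAt_mono v' hP'Λ hy, v, hv, hvΛ, p, hpd, hp, rfl⟩
  have hex : ∃ r, IsPullbackValue C k f v' y r := ⟨_, hval⟩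
  simp only [pullback, if_neg hold, dif_pos hex]
  exact hf.isPullbackValue_unique hSCR hex.choose_spec hval

lemma IsPullbackTuple.eq_evalR (ht : IsPullbackTuple C C' k f f') (hf : AffinePP C k f)
    (hΛ : Λ ∈ C.polys) (hfd : FullDim Λ) (hv : v ∈ C.vtx) (hvΛ : v ∈ Λ)
    (hpd : p.totalDegree ≤ k) (hp : ∀ y ∈ coneAt v Λ, f v y = evalR p y)
    {P' : Set (Fin m → ℝ)} (hP' : P' ∈ C'.polys) (hP'Λ : P' ⊆ Λ) {v' : Fin m → ℝ}
    (hv' : v' ∈ C'.vtx) (hv'P' : v' ∈ P') {y : Fin m → ℝ} (hy : y ∈ coneAt v' P') :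
    f' v' y = evalR p (y + v' - v) := by
  by_cases hold : v' ∈ C.vtx
  · rw [ht.1 v' hv' hold y ⟨P', hP', hv'P', hy⟩, hf.evalR_add_sub_eq hΛ hfd hv hvΛ hpd hp hold
      (hP'Λ hv'P') (coneAt_mono v' hP'Λ hy)]
  · exact ht.2 v' hv' hold Λ hΛ hfd (hP'Λ hv'P') v hv hvΛ p hpd hp P' hP' hv'P' hP'Λ y hy

lemma affinePP_pullback (hf : AffinePP C k f) (hC : C.IsComplete) (href : Refines C' C)
    (hSCR : ∀ P ∈ C.polys, ∃ v ∈ C.vtx, v ∈ P) : AffinePP C' k (pullback C k f) := by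
  have ht := isPullbackTuple_pullback (C' := C') hf hSCR
  constructor
  · intro v' hv' P' hP' hv'P'
    obtain ⟨Λ, hΛ, hfd, hP'Λ, v, hv, hvΛ, p, hpd, hp⟩ :=
      hf.exists_fullDim_superset_rep hC href hSCR hP'
    obtain ⟨w', rfl⟩ := C'.exists_eq_ιQ_of_mem_vtx hv'
    obtain ⟨w, rfl⟩ := C.exists_eq_ιQ_of_mem_vtx hv
    refine ⟨transl (w' - w) p, (totalDegree_transl_le _ _).trans hpd, fun y hy => ?_⟩
    rw [ht.eq_evalR hf hΛ hfd hv hvΛ hpd hp hP' hP'Λ hv' hv'P' hy, evalR_transl]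
    congr 1
    ext i
    simp [ιQ, add_sub_assoc]
  · intro Λ' hΛ' hfd' v'₁ hv'₁ hv'₁Λ' v'₂ hv'₂ hv'₂Λ' p₁ p₂ _ hp₁ _ hp₂ x
    obtain ⟨Λ, hΛ, hfd, hΛ'Λ, v, hv, hvΛ, q, hqd, hq⟩ :=
      hf.exists_fullDim_superset_rep hC href hSCR hΛ'
    have hrep : ∀ v' ∈ C'.vtx, v' ∈ Λ' → ∀ p' : MvPolynomial (Fin m) ℚ,
        (∀ y ∈ coneAt v' Λ', pullback C k f v' y = evalR p' y) →
        evalR p' (x - v') = evalR q (x - v) := by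
      intro v' hv' hv'Λ' p' hp'
      have := eq_of_eqOn_coneAt (analyticOnNhd_evalR p') (analyticOnNhd_evalR_comp_add q (v' - v))
        hfd' v' fun y hy => by
          rw [← hp' y hy, ht.eq_evalR hf hΛ hfd hv hvΛ hqd hq hΛ' hΛ'Λ hv' hv'Λ' hy, add_sub_assoc]
      rw [congrFun this, sub_add_sub_cancel]
    rw [hrep v'₁ hv'₁ hv'₁Λ' p₁ hp₁, hrep v'₂ hv'₂ hv'₂Λ' p₂ hp₂]

lemma IsPullbackTuple.eq_of_isPullbackTuple {f'' : (Fin m → ℝ) → (Fin m → ℝ) → ℝ}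
    (ht' : IsPullbackTuple C C' k f f') (ht'' : IsPullbackTuple C C' k f f'') (hf : AffinePP C k f)
    (hC : C.IsComplete) (href : Refines C' C) (hSCR : ∀ P ∈ C.polys, ∃ v ∈ C.vtx, v ∈ P)
    {v' y : Fin m → ℝ} (hv' : v' ∈ C'.vtx) (hy : InStar C' v' y) : f' v' y = f'' v' y := by
  obtain ⟨P', hP', hv'P', hy⟩ := hy
  obtain ⟨Λ, hΛ, hfd, hP'Λ, v, hv, hvΛ, p, hpd, hp⟩ :=
    hf.exists_fullDim_superset_rep hC href hSCR hP'
  rw [ht'.eq_evalR hf hΛ hfd hv hvΛ hpd hp hP' hP'Λ hv' hv'P' hy,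
    ht''.eq_evalR hf hΛ hfd hv hvΛ hpd hp hP' hP'Λ hv' hv'P' hy]

lemma IsPullbackTuple.eq_of_eqOn_inStar {g g' : (Fin m → ℝ) → (Fin m → ℝ) → ℝ}
    (htf : IsPullbackTuple C C' k f f') (htg : IsPullbackTuple C C' k g g') (hf : AffinePP C k f)
    (hg : AffinePP C k g) (hC : C.IsComplete) (hC' : C'.IsComplete) (href : Refines C' C)
    (hSCR' : ∀ P ∈ C'.polys, ∃ v ∈ C'.vtx, v ∈ P)
    (hfg : ∀ v' ∈ C'.vtx, ∀ y, InStar C' v' y → f' v' y = g' v' y)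
    (hv : v ∈ C.vtx) {y : Fin m → ℝ} (hy : InStar C v y) : f v y = g v y := by
  obtain ⟨P, hP, hvP, hy⟩ := hy
  obtain ⟨Λ, hΛ, hfd, hPΛ⟩ := C.exists_fullDim_superset hC hP
  obtain ⟨pf, hpfd, hpf⟩ := hf.1 v hv Λ hΛ (hPΛ hvP)
  obtain ⟨pg, hpgd, hpg⟩ := hg.1 v hv Λ hΛ (hPΛ hvP)
  obtain ⟨P', hP', hfd', hP'Λ⟩ := href.exists_fullDim_subset hC' hΛ hfd
  obtain ⟨v', hv', hv'P'⟩ := hSCR' P' hP'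
  have hpfg := eq_of_eqOn_coneAt (analyticOnNhd_evalR_comp_add pf (v' - v))
    (analyticOnNhd_evalR_comp_add pg (v' - v)) hfd' v' fun z hz => by
      rw [← add_sub_assoc, ← htf.eq_evalR hf hΛ hfd hv (hPΛ hvP) hpfd hpf hP' hP'Λ hv' hv'P' hz,
        ← htg.eq_evalR hg hΛ hfd hv (hPΛ hvP) hpgd hpg hP' hP'Λ hv' hv'P' hz,
        hfg v' hv' z ⟨P', hP', hv'P', hz⟩]
  have hy' := coneAt_mono v hPΛ hy
  simpa [hpf y hy', hpg y hy'] using congrFun hpfg (y - (v' - v))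

lemma IsPullbackTuple.map₂ {l : ℕ} {g g' : (Fin m → ℝ) → (Fin m → ℝ) → ℝ} (op : ℝ → ℝ → ℝ)
    (hop : ∀ p q : MvPolynomial (Fin m) ℚ, ∃ r, ∀ x, evalR r x = op (evalR p x) (evalR q x))
    (htf : IsPullbackTuple C C' k f f') (htg : IsPullbackTuple C C' l g g')
    (hf : AffinePP C k f) (hg : AffinePP C l g) (n : ℕ) :
    IsPullbackTuple C C' n (fun v y => op (f v y) (g v y)) (fun v y => op (f' v y) (g' v y)) := by
  refine ⟨fun v' hv' hold y hy => by simp only [htf.1 v' hv' hold y hy, htg.1 v' hv' hold y hy],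
    ?_⟩
  intro v' hv' hold Λ hΛ hfd hv'Λ v hv hvΛ p _ hp P' hP' hv'P' hP'Λ y hy
  dsimp only at hp ⊢
  obtain ⟨pf, hpfd, hpf⟩ := hf.1 v hv Λ hΛ hvΛ
  obtain ⟨pg, hpgd, hpg⟩ := hg.1 v hv Λ hΛ hvΛ
  obtain ⟨r, hr⟩ := hop pf pg
  have hpr := eq_of_eqOn_coneAt (analyticOnNhd_evalR p) (analyticOnNhd_evalR r) hfd v
    fun z hz => by rw [hr, ← hp z hz, hpf z hz, hpg z hz]
  rw [htf.2 v' hv' hold Λ hΛ hfd hv'Λ v hv hvΛ pf hpfd hpf P' hP' hv'P' hP'Λ y hy,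
    htg.2 v' hv' hold Λ hΛ hfd hv'Λ v hv hvΛ pg hpgd hpg P' hP' hv'P' hP'Λ y hy, congrFun hpr, hr]

end Pullback

theorem stmt13_general {n : ℕ} (C C' : PolyComplex n)
    (hC : C.IsComplete) (hC' : C'.IsComplete)
    (href : Refines C' C)
    (hSCR : ∀ P ∈ C.polys, ∃ v ∈ C.vtx, v ∈ P)
    (hSCR' : ∀ P ∈ C'.polys, ∃ v ∈ C'.vtx, v ∈ P) (k : ℕ) :
    (∀ f, AffinePP C k f → ∃ f', AffinePP C' k f' ∧ IsPullbackTuple C C' k f f') ∧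
    (∀ f f'₁ f'₂, AffinePP C k f → AffinePP C' k f'₁ → AffinePP C' k f'₂ →
      IsPullbackTuple C C' k f f'₁ → IsPullbackTuple C C' k f f'₂ →
      ∀ v' ∈ C'.vtx, ∀ y, InStar C' v' y → f'₁ v' y = f'₂ v' y) ∧
    (∀ f g f' g', AffinePP C k f → AffinePP C k g →
      IsPullbackTuple C C' k f f' → IsPullbackTuple C C' k g g' →
      (∀ v' ∈ C'.vtx, ∀ y, InStar C' v' y → f' v' y = g' v' y) →
      ∀ v ∈ C.vtx, ∀ y, InStar C v y → f v y = g v y) ∧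
    (∀ f g f' g', AffinePP C k f → AffinePP C k g →
      IsPullbackTuple C C' k f f' → IsPullbackTuple C C' k g g' →
      IsPullbackTuple C C' k (fun v y => f v y + g v y) (fun v y => f' v y + g' v y)) ∧
    (∀ (l : ℕ) f g f' g', AffinePP C k f → AffinePP C l g →
      IsPullbackTuple C C' k f f' → IsPullbackTuple C C' l g g' →
      IsPullbackTuple C C' (k + l) (fun v y => f v y * g v y)
        (fun v y => f' v y * g' v y)) := by
  refine ⟨fun f hf => ⟨pullback C k f, affinePP_pullback hf hC href hSCR,
      isPullbackTuple_pullback hf hSCR⟩,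
    fun f f'₁ f'₂ hf _ _ ht₁ ht₂ v' hv' y hy =>
      ht₁.eq_of_isPullbackTuple ht₂ hf hC href hSCR hv' hy,
    fun f g f' g' hf hg htf htg hfg v hv y hy =>
      htf.eq_of_eqOn_inStar htg hf hg hC hC' href hSCR' hfg hv hy,
    fun f g f' g' hf hg htf htg =>
      htf.map₂ (· + ·) (fun p q => ⟨p + q, by simp [evalR]⟩) htg hf hg k,
    fun l f g f' g' hf hg htf htg =>
      htf.map₂ (· * ·) (fun p q => ⟨p * q, by simp [evalR]⟩) htg hf hg (k + l)⟩

/-- For a regular SCR polyhedral complex `Π'` refining a complete regular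
SCR polyhedral complex `Π`, the pullback `π_s^*` of affine piecewise polynomial functions
(given by `(π_s^* f)_{v'} = f_{v'}` at old vertices and by the translated representing
polynomial `f_{v,Λ}` at new vertices) is well defined (independent of all choices) and is
an injective graded ring homomorphism `PP^*(Π) → PP^*(Π')`. -/
theorem stmt13 {n : ℕ} (C C' : PolyComplex n)
    (hC : C.IsComplete) (hC' : C'.IsComplete)
    (hreg : C.IsRegular) (hreg' : C'.IsRegular)
    (href : Refines C' C)
    (hSCR : ∀ P ∈ C.polys, ∃ v ∈ C.vtx, v ∈ P)
    (hSCR' : ∀ P ∈ C'.polys, ∃ v ∈ C'.vtx, v ∈ P) (k : ℕ) :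
    (∀ f, AffinePP C k f → ∃ f', AffinePP C' k f' ∧ IsPullbackTuple C C' k f f') ∧
    (∀ f f'₁ f'₂, AffinePP C k f → AffinePP C' k f'₁ → AffinePP C' k f'₂ →
      IsPullbackTuple C C' k f f'₁ → IsPullbackTuple C C' k f f'₂ →
      ∀ v' ∈ C'.vtx, ∀ y, InStar C' v' y → f'₁ v' y = f'₂ v' y) ∧
    (∀ f g f' g', AffinePP C k f → AffinePP C k g →
      IsPullbackTuple C C' k f f' → IsPullbackTuple C C' k g g' →
      (∀ v' ∈ C'.vtx, ∀ y, InStar C' v' y → f' v' y = g' v' y) →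
      ∀ v ∈ C.vtx, ∀ y, InStar C v y → f v y = g v y) ∧
    (∀ f g f' g', AffinePP C k f → AffinePP C k g →
      IsPullbackTuple C C' k f f' → IsPullbackTuple C C' k g g' →
      IsPullbackTuple C C' k (fun v y => f v y + g v y) (fun v y => f' v y + g' v y)) ∧
    (∀ (l : ℕ) f g f' g', AffinePP C k f → AffinePP C l g →
      IsPullbackTuple C C' k f f' → IsPullbackTuple C C' l g g' →
      IsPullbackTuple C C' (k + l) (fun v y => f v y * g v y)
        (fun v y => f' v y * g' v y)) :=
  stmt13_general C C' hC hC' href hSCR hSCR' k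

end PPArakelov
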